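/- For i ∈ ℤ, let A_i denote the annulus {x ∈ ℝ³ : 2^{i−1} ≤ ‖x‖ < 2^i}, where ‖·‖ is the Euclidean norm. There exists a finite constant C such that for every Lebesgue measurable set E ⊂ ℝ³, ( Σ_{i∈ℤ} 2^{−i} |E ∩ A_i| )^{1/2} ≤ C |E|^{1/3}. -/

import Mathlib

open MeasureTheory Set
open scoped ENNReal NNReal

/-- The annulus `{x ∈ ℝ³ : 2^(i-1) ≤ ‖x‖ < 2^i}`. -/
def Ann3 (i : ℤ) : Set (EuclideanSpace ℝ (Fin 3)) :=
  {x | (2 : ℝ) ^ (i - 1) ≤ ‖x‖ ∧ ‖x‖ < (2 : ℝ) ^ i}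

private lemma ofReal_two_zpow (i : ℤ) : ENNReal.ofReal ((2:ℝ) ^ i) = (2:ℝ≥0∞) ^ i := by
  rw [← Real.rpow_intCast, ← ENNReal.ofReal_rpow_of_pos two_pos, ENNReal.ofReal_ofNat,
    ENNReal.rpow_intCast]

private lemma zpow_neg_nat' (k : ℕ) : (2:ℝ≥0∞)^(-(k:ℤ)) = ((2:ℝ≥0∞)⁻¹)^k := by
  rw [ENNReal.zpow_neg, zpow_natCast, ← ENNReal.inv_pow]

private lemma zpow_split (t : ℤ) (k : ℕ) :
    (2:ℝ≥0∞)^(-((k:ℤ) + (t+1))) = (2:ℝ≥0∞)^(-t) * ((2:ℝ≥0∞)⁻¹)^(k+1) := by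
  rw [show -((k:ℤ) + (t+1)) = -t + -((k:ℤ)+1) by ring,
    ENNReal.zpow_add two_ne_zero ENNReal.ofNat_ne_top,
    show -((k:ℤ)+1) = -(((k+1:ℕ)):ℤ) by push_cast; ring, zpow_neg_nat']

private lemma zpow_split2 (t : ℤ) (k : ℕ) :
    (2:ℝ≥0∞)^(2*(t - (k:ℤ))) ≤ (2:ℝ≥0∞)^(2*t) * ((2:ℝ≥0∞)⁻¹)^k := by
  rw [← zpow_neg_nat', ← ENNReal.zpow_add two_ne_zero ENNReal.ofNat_ne_top]
  exact ENNReal.zpow_le_of_le one_le_two (by omega)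

private lemma geom_one (a : ℝ≥0∞) : ∑' k:ℕ, a * ((2:ℝ≥0∞)⁻¹)^(k+1) = a := by
  rw [ENNReal.tsum_mul_left, ENNReal.tsum_geometric_add_one, ENNReal.one_sub_inv_two]
  simp [ENNReal.inv_mul_cancel, mul_assoc]

private lemma geom_two (a : ℝ≥0∞) : ∑' k:ℕ, a * ((2:ℝ≥0∞)⁻¹)^k = a * 2 := by
  rw [ENNReal.tsum_mul_left, ENNReal.tsum_geometric, ENNReal.one_sub_inv_two]; simp

private lemma rpow_two_thirds (t : ℤ) {m : ℝ≥0∞} (h : (2:ℝ≥0∞)^(3*t) ≤ m) :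
    (2:ℝ≥0∞)^(2*t) ≤ m ^ (2/3 : ℝ) := by
  have : ((2:ℝ≥0∞)^(3*t)) ^ (2/3:ℝ) = (2:ℝ≥0∞)^(2*t) := by
    rw [← ENNReal.rpow_intCast 2 (3*t), ← ENNReal.rpow_mul, ← ENNReal.rpow_intCast 2 (2*t)]
    congr 1
    push_cast
    ring
  rw [← this]
  exact ENNReal.rpow_le_rpow h (by norm_num)

/-- `(Σ_i 2^{-i} |E ∩ A_i|)^{1/2} ≤ C |E|^{1/3}` in `ℝ³`. -/
theorem statement17 :
    ∃ C : ℝ≥0∞, C ≠ ⊤ ∧ ∀ E : Set (EuclideanSpace ℝ (Fin 3)), MeasurableSet E →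
      (∑' i : ℤ, (2 : ℝ≥0∞) ^ (-i) * volume (E ∩ Ann3 i)) ^ (1/2 : ℝ)
        ≤ C * (volume E) ^ (1/3 : ℝ) := by
  set c : ℝ≥0∞ := volume (Metric.ball (0 : EuclideanSpace ℝ (Fin 3)) 1) with hc
  have hcT : c ≠ ⊤ := measure_ball_lt_top.ne
  have hCT : (2*c+8 : ℝ≥0∞) ≠ ⊤ := by finiteness
  refine ⟨(2*c+8) ^ (1/2 : ℝ), ENNReal.rpow_ne_top_of_nonneg (by norm_num) hCT, ?_⟩
  intro E _
  set m : ℝ≥0∞ := volume E with hm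
  set f : ℤ → ℝ≥0∞ := fun i => (2:ℝ≥0∞)^(-i) * volume (E ∩ Ann3 i) with hf
  have hterm_m : ∀ i:ℤ, f i ≤ (2:ℝ≥0∞)^(-i) * m :=
    fun i => mul_le_mul_right (measure_mono inter_subset_left) _
  have hterm_c : ∀ i:ℤ, f i ≤ (2:ℝ≥0∞)^(2*i) * c := by
    intro i
    have hsub : Ann3 i ⊆ Metric.ball (0 : EuclideanSpace ℝ (Fin 3)) ((2:ℝ)^i) := fun x hx => by
      simpa [mem_ball_zero_iff] using hx.2
    have hball : volume (Metric.ball (0 : EuclideanSpace ℝ (Fin 3)) ((2:ℝ)^i))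
        = (2:ℝ≥0∞)^(3*i) * c := by
      rw [Measure.addHaar_ball _ _ (by positivity : (0:ℝ) ≤ 2^i)]
      congr 1
      rw [finrank_euclideanSpace_fin, ← zpow_natCast ((2:ℝ)^i), ← zpow_mul, ← ofReal_two_zpow]
      norm_num [mul_comm]
    calc f i ≤ (2:ℝ≥0∞)^(-i) * ((2:ℝ≥0∞)^(3*i) * c) := by
          refine mul_le_mul_right ?_ _
          exact le_trans (measure_mono (inter_subset_right.trans hsub)) hball.le
      _ = (2:ℝ≥0∞)^(2*i) * c := by
          rw [← mul_assoc, ← ENNReal.zpow_add two_ne_zero ENNReal.ofNat_ne_top,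
            show -i + 3*i = 2*i by ring]
  by_cases h0 : m = 0
  · have hz : ∑' i : ℤ, f i = 0 := ENNReal.tsum_eq_zero.mpr fun i =>
      le_antisymm (by simpa [h0] using hterm_m i) zero_le
    rw [hz, ENNReal.zero_rpow_of_pos (by norm_num : (0:ℝ) < 1/2)]
    exact zero_le
  by_cases hT : m = ⊤
  · have h1 : (volume E) ^ (1/3:ℝ) = ⊤ := by
      rw [← hm, hT]; exact ENNReal.top_rpow_of_pos (by norm_num)
    have h2 : ((2*c+8 : ℝ≥0∞)) ^ (1/2:ℝ) ≠ 0 :=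
      (ENNReal.rpow_pos (lt_of_lt_of_le (by norm_num : (0:ℝ≥0∞) < 8) le_add_self) hCT).ne'
    rw [h1, ENNReal.mul_top h2]
    exact le_top
  obtain ⟨n, hn1, hn2⟩ := ENNReal.exists_mem_Ico_zpow h0 hT ENNReal.one_lt_two ENNReal.ofNat_ne_top
  set t : ℤ := n / 3 with htdef
  have key1 : (2:ℝ≥0∞)^(3*t) ≤ m :=
    le_trans (ENNReal.zpow_le_of_le one_le_two (by omega)) hn1
  have key2 : m ≤ (2:ℝ≥0∞)^(3*t+3) :=
    le_trans hn2.le (ENNReal.zpow_le_of_le one_le_two (by omega))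
  -- split the sum
  have hsplit : ∑' i : ℤ, f i
      = (∑' k : ℕ, f ((k:ℤ) + (t+1))) + ∑' k : ℕ, f (-((k:ℤ)+1) + (t+1)) := by
    rw [← (Equiv.addRight (t+1)).tsum_eq f]
    exact tsum_of_nat_of_neg_add_one ENNReal.summable ENNReal.summable
  have hA : (∑' k : ℕ, f ((k:ℤ) + (t+1))) ≤ (2:ℝ≥0∞)^(-t) * m := by
    calc (∑' k : ℕ, f ((k:ℤ) + (t+1)))
        ≤ ∑' k : ℕ, ((2:ℝ≥0∞)^(-t) * m) * ((2:ℝ≥0∞)⁻¹)^(k+1) := by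
          refine ENNReal.tsum_le_tsum fun k => le_trans (hterm_m _) ?_
          rw [zpow_split t k]; ring_nf; exact le_rfl
      _ = (2:ℝ≥0∞)^(-t) * m := geom_one _
  have hB : (∑' k : ℕ, f (-((k:ℤ)+1) + (t+1))) ≤ ((2:ℝ≥0∞)^(2*t) * c) * 2 := by
    calc (∑' k : ℕ, f (-((k:ℤ)+1) + (t+1)))
        ≤ ∑' k : ℕ, ((2:ℝ≥0∞)^(2*t) * c) * ((2:ℝ≥0∞)⁻¹)^k := by
          refine ENNReal.tsum_le_tsum fun k => ?_
          rw [show -((k:ℤ)+1) + (t+1) = t - (k:ℤ) by ring]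
          refine (hterm_c _).trans ?_
          calc (2:ℝ≥0∞)^(2*(t - (k:ℤ))) * c
              ≤ ((2:ℝ≥0∞)^(2*t) * ((2:ℝ≥0∞)⁻¹)^k) * c := mul_le_mul_left (zpow_split2 t k) _
            _ = ((2:ℝ≥0∞)^(2*t) * c) * ((2:ℝ≥0∞)⁻¹)^k := by ring
      _ = ((2:ℝ≥0∞)^(2*t) * c) * 2 := geom_two _
  -- total bound
  have h2t : (2:ℝ≥0∞)^(2*t) ≤ m ^ (2/3:ℝ) := rpow_two_thirds t key1
  have hAm : (2:ℝ≥0∞)^(-t) * m ≤ 8 * m ^ (2/3:ℝ) := by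
    calc (2:ℝ≥0∞)^(-t) * m ≤ (2:ℝ≥0∞)^(-t) * (2:ℝ≥0∞)^(3*t+3) := mul_le_mul_right key2 _
      _ = 8 * (2:ℝ≥0∞)^(2*t) := by
          rw [← ENNReal.zpow_add two_ne_zero ENNReal.ofNat_ne_top,
            show -t + (3*t+3) = 2*t + 3 by ring,
            ENNReal.zpow_add two_ne_zero ENNReal.ofNat_ne_top,
            show ((3:ℤ)) = ((3:ℕ):ℤ) from rfl, zpow_natCast]
          norm_num [mul_comm]
      _ ≤ 8 * m ^ (2/3:ℝ) := mul_le_mul_right h2t _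
  have hsum : ∑' i : ℤ, f i ≤ (2*c+8) * m ^ (2/3:ℝ) := by
    rw [hsplit]
    calc (∑' k : ℕ, f ((k:ℤ) + (t+1))) + ∑' k : ℕ, f (-((k:ℤ)+1) + (t+1))
        ≤ (2:ℝ≥0∞)^(-t) * m + ((2:ℝ≥0∞)^(2*t) * c) * 2 := add_le_add hA hB
      _ ≤ 8 * m ^ (2/3:ℝ) + (m ^ (2/3:ℝ) * c) * 2 :=
          add_le_add hAm (mul_le_mul_left (mul_le_mul_left h2t _) _)
      _ = (2*c+8) * m ^ (2/3:ℝ) := by ring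
  calc (∑' i : ℤ, (2 : ℝ≥0∞) ^ (-i) * volume (E ∩ Ann3 i)) ^ (1/2 : ℝ)
      ≤ ((2*c+8) * m ^ (2/3:ℝ)) ^ (1/2:ℝ) := ENNReal.rpow_le_rpow hsum (by norm_num)
    _ = (2*c+8) ^ (1/2:ℝ) * (volume E) ^ (1/3:ℝ) := by
        rw [ENNReal.mul_rpow_of_nonneg _ _ (by norm_num), ← ENNReal.rpow_mul, ← hm]
        norm_num
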